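/- arXiv:0911.2415 — 12 statements merged into one kernel-verified Lean document; each statement's English description precedes it below -/
import Mathlib

section
/- For every nonnegative integer n, the sum over k from 0 to n of binomial(n+k, 2k) * (-4)^k / (2k+1) equals (-1)^n / (2n+1). -/
/-!
Writing `S n` for the sum of the summands `a(n,k)`, these satisfy the WZ-style relation
`(2n+3)·a(n+1,k) + (2n+1)·a(n,k) = G(k+1) - G(k)` with `G(k+1) = -(-4)^(k+1)·C(n+k+1, 2k+1)`
and `G 0 = 0`. Since `a(n,k)` vanishes for `k > n`, summing over `k ≤ n+1` telescopes to
`(2n+3)·S(n+1) + (2n+1)·S(n) = 0`, so `(2n+1)·S(n) = (-1)^n`.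
-/

open Finset

namespace ChooseAlternatingSum

def term (n k : ℕ) : ℚ := ((n + k).choose (2 * k) : ℚ) * (-4) ^ k / (2 * k + 1)

def certificate (n : ℕ) : ℕ → ℚ
  | 0 => 0
  | k + 1 => -(-4) ^ (k + 1) * ((n + k + 1).choose (2 * k + 1) : ℚ)

lemma term_eq_zero_of_lt {n k : ℕ} (h : n < k) : term n k = 0 := by
  simp [term, Nat.choose_eq_zero_of_lt (by omega : n + k < 2 * k)]

lemma sum_range_term_of_lt {n m : ℕ} (h : n < m) :
    ∑ k ∈ range m, term n k = ∑ k ∈ range (n + 1), term n k := by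
  refine (sum_subset (range_subset_range.mpr h) fun k hkm hkn => ?_).symm
  exact term_eq_zero_of_lt (by simpa using hkn)

lemma certificate_eq_zero_of_lt {n k : ℕ} (h : n + 1 < k) : certificate n k = 0 := by
  obtain ⟨k, rfl⟩ : ∃ j, k = j + 1 := ⟨k - 1, by omega⟩
  simp [certificate, Nat.choose_eq_zero_of_lt (by omega : n + k + 1 < 2 * k + 1)]

lemma term_recurrence (n k : ℕ) :
    (2 * n + 3) * term (n + 1) k + (2 * n + 1) * term n k =
      certificate n (k + 1) - certificate n k := by
  cases k with
  | zero => simp [term, certificate]; ring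
  | succ k =>
    have pascal : ((n + k + 2).choose (2 * k + 2) : ℚ) =
        (n + k + 1).choose (2 * k + 1) + (n + k + 1).choose (2 * k + 2) := by
      exact_mod_cast Nat.choose_succ_succ' (n + k + 1) (2 * k + 1)
    have absorb : ((n : ℚ) + k + 2) * (n + k + 1).choose (2 * k + 1) =
        (n + k + 2).choose (2 * k + 2) * (2 * k + 2) := by
      exact_mod_cast Nat.add_one_mul_choose_eq (n + k + 1) (2 * k + 1)
    have absorb' : ((n : ℚ) + k + 2) * (n + k + 1).choose (2 * k + 2) =
        (n + k + 2).choose (2 * k + 3) * (2 * k + 3) := by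
      exact_mod_cast Nat.add_one_mul_choose_eq (n + k + 1) (2 * k + 2)
    simp only [term, certificate]
    rw [show n + 1 + (k + 1) = n + k + 2 by omega, show n + (k + 1) = n + k + 1 by omega,
      show n + k + 1 + 1 = n + k + 2 by omega, show 2 * (k + 1) = 2 * k + 2 by omega,
      show 2 * k + 2 + 1 = 2 * k + 3 by omega]
    have hk : (2 * ((k + 1 : ℕ) : ℚ) + 1) ≠ 0 := by positivity
    field_simp
    push_cast
    linear_combination (-4 : ℚ) ^ (k + 1) *
      ((2 * n + 4 * k + 7) * pascal + 4 * absorb' + 2 * absorb)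

lemma sum_recurrence (n : ℕ) :
    (2 * n + 3) * ∑ k ∈ range (n + 2), term (n + 1) k +
      (2 * n + 1) * ∑ k ∈ range (n + 1), term n k = 0 := by
  rw [← sum_range_term_of_lt (n := n) (m := n + 2) (by omega), mul_sum, mul_sum,
    ← sum_add_distrib]
  simp only [term_recurrence]
  rw [sum_range_sub, certificate_eq_zero_of_lt (by omega), certificate, sub_zero]

end ChooseAlternatingSum

open ChooseAlternatingSum in
theorem stmt_0 (n : ℕ) :
    ∑ k ∈ Finset.range (n + 1),
      ((n + k).choose (2 * k) : ℚ) * (-4) ^ k / (2 * k + 1) =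
    (-1) ^ n / (2 * n + 1) := by
  suffices h : (2 * n + 1) * ∑ k ∈ range (n + 1), term n k = (-1) ^ n by
    rw [eq_div_iff (by positivity), mul_comm, ← h]; rfl
  induction n with
  | zero => simp [term]
  | succ n ih =>
    have recurrence := sum_recurrence n
    push_cast
    rw [pow_succ]
    linear_combination recurrence - ih
end

section
/- For every nonnegative integer n, the sum over k from 0 to n of binomial(n+k, 2k) * (-1)^k / (2k+1) equals (-1)^n/(2n+1) if 3 does not divide 2n+1, and equals 2*(-1)^(n-1)/(2n+1) if 3 divides 2n+1. -/
/-!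
Since `(2k+1) C(n+k, 2k+1) = (n-k) C(n+k, 2k)`, multiplying the sum by `2n+1` turns it into the
integer `a n = F n + 2 G n`, where `F n = ∑ (-1)^k C(n+k, 2k)` and `G n = ∑ (-1)^k C(n+k, 2k+1)`.
Pascal's rule gives `F (n+1) = -G n` and `G (n+1) = F n + G n`: a linear map whose cube is `-1`.
Hence `a (n+3) = -a n`, and `a` is determined by `a 0, a 1, a 2 = 1, 2, 1`.
-/

open Finset

theorem two_mul_add_one_mul_choose (n k : ℕ) :
    (2 * n + 1) * (n + k).choose (2 * k)
      = (2 * k + 1) * ((n + k).choose (2 * k) + 2 * (n + k).choose (2 * k + 1)) := by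
  have h := Nat.choose_succ_right_eq (n + k) (2 * k)
  rw [show n + k - 2 * k = n - k by omega] at h
  rcases le_or_gt k n with hk | hk
  · obtain ⟨m, rfl⟩ := Nat.exists_eq_add_of_le hk
    rw [Nat.add_sub_cancel_left] at h
    nlinarith [h]
  · simp [Nat.choose_eq_zero_of_lt (show n + k < 2 * k by omega),
      Nat.choose_eq_zero_of_lt (show n + k < 2 * k + 1 by omega)]

section DiagChoose

variable {R : Type*} [CommRing R]

/-- For `j = 0, 1` these are the Morgan–Voyce polynomials `b_n(x)` and `B_{n-1}(x)`
(with `B_{-1} = 0`). -/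
def diagChoose (x : R) (j n : ℕ) : R :=
  ∑ k ∈ range (n + 1), ((n + k).choose (2 * k + j) : R) * x ^ k

theorem sum_range_choose_mul_pow_eq_of_le (x : R) {j n N M : ℕ} (hNM : N ≤ M) (hN : n < N + j) :
    ∑ k ∈ range M, ((n + k).choose (2 * k + j) : R) * x ^ k
      = ∑ k ∈ range N, ((n + k).choose (2 * k + j) : R) * x ^ k := by
  refine (sum_subset (range_subset_range.2 hNM) fun k _ hk => ?_).symm
  rw [mem_range, not_lt] at hk
  rw [Nat.choose_eq_zero_of_lt (by omega), Nat.cast_zero, zero_mul]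

theorem diagChoose_eq_sum_range (x : R) {j n N : ℕ} (hN : n < N + j) :
    diagChoose x j n = ∑ k ∈ range N, ((n + k).choose (2 * k + j) : R) * x ^ k := by
  rcases le_total N (n + 1) with h | h
  · exact sum_range_choose_mul_pow_eq_of_le x h hN
  · exact (sum_range_choose_mul_pow_eq_of_le x h (by omega)).symm

theorem diagChoose_one_succ (x : R) (n : ℕ) :
    diagChoose x 1 (n + 1) = diagChoose x 0 n + diagChoose x 1 n := by
  rw [diagChoose, diagChoose_eq_sum_range x (N := n + 2) (j := 0) (by omega),
    diagChoose_eq_sum_range x (N := n + 2) (j := 1) (by omega), ← sum_add_distrib]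
  refine sum_congr rfl fun k _ => ?_
  rw [show n + 1 + k = n + k + 1 by ring, Nat.choose_succ_succ', Nat.cast_add, add_zero, add_mul]

theorem diagChoose_zero_succ (x : R) (n : ℕ) :
    diagChoose x 0 (n + 1) = diagChoose x 0 n + x * diagChoose x 1 (n + 1) := by
  rw [diagChoose, diagChoose_eq_sum_range x (N := n + 2) (j := 0) (by omega),
    diagChoose_eq_sum_range x (N := n + 1) (j := 1) (by omega), ← sub_eq_iff_eq_add',
    ← sum_sub_distrib, sum_range_succ', mul_sum]
  simp only [mul_zero, add_zero, Nat.choose_zero_right, sub_self]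
  refine sum_congr rfl fun k _ => ?_
  rw [show n + 1 + (k + 1) = n + (k + 1) + 1 by ring, show 2 * (k + 1) = 2 * k + 1 + 1 by ring,
    Nat.choose_succ_succ' (n + (k + 1)), show n + (k + 1) = n + 1 + k by ring, Nat.cast_add]
  ring

theorem diagChoose_neg_one_add_three (n : ℕ) :
    diagChoose (-1 : R) 0 (n + 3) = -diagChoose (-1) 0 n ∧
      diagChoose (-1 : R) 1 (n + 3) = -diagChoose (-1) 1 n := by
  simp only [diagChoose_zero_succ, diagChoose_one_succ]
  constructor <;> ring

theorem diagChoose_neg_one_three_mul_add (q r : ℕ) :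
    diagChoose (-1 : R) 0 (3 * q + r) + 2 * diagChoose (-1) 1 (3 * q + r)
      = (-1) ^ q * (diagChoose (-1) 0 r + 2 * diagChoose (-1) 1 r) := by
  induction q with
  | zero => simp
  | succ q ih =>
    obtain ⟨h₀, h₁⟩ := diagChoose_neg_one_add_three (R := R) (3 * q + r)
    rw [show 3 * (q + 1) + r = 3 * q + r + 3 by ring, h₀, h₁, pow_succ]
    linear_combination -ih

end DiagChoose

theorem sum_choose_mul_pow_div_eq {K : Type*} [Field K] [CharZero K] (x : K) (n : ℕ) :
    ∑ k ∈ range (n + 1), ((n + k).choose (2 * k) : K) * x ^ k / (2 * k + 1)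
      = (diagChoose x 0 n + 2 * diagChoose x 1 n) / (2 * n + 1) := by
  have hn : (2 * n + 1 : K) ≠ 0 := by exact_mod_cast (2 * n).succ_ne_zero
  rw [eq_div_iff hn, diagChoose, diagChoose, mul_sum, ← sum_add_distrib, sum_mul]
  refine sum_congr rfl fun k _ => ?_
  have hk : (2 * k + 1 : K) ≠ 0 := by exact_mod_cast (2 * k).succ_ne_zero
  have h : ((2 * n + 1 : ℕ) : K) * (n + k).choose (2 * k)
      = ((2 * k + 1 : ℕ) : K) * ((n + k).choose (2 * k) + 2 * (n + k).choose (2 * k + 1)) := by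
    exact_mod_cast two_mul_add_one_mul_choose n k
  push_cast at h
  rw [div_mul_eq_mul_div, div_eq_iff hk, add_zero]
  linear_combination x ^ k * h

theorem stmt_1 (n : ℕ) :
    ∑ k ∈ Finset.range (n + 1),
      ((n + k).choose (2 * k) : ℚ) * (-1) ^ k / (2 * k + 1) =
    if 3 ∣ (2 * n + 1) then 2 * (-1 : ℚ) ^ (n - 1) / (2 * n + 1)
    else (-1 : ℚ) ^ n / (2 * n + 1) := by
  rw [sum_choose_mul_pow_div_eq]
  obtain ⟨q, r, hr, rfl⟩ : ∃ q r, r < 3 ∧ n = 3 * q + r :=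
    ⟨n / 3, n % 3, Nat.mod_lt n three_pos, (Nat.div_add_mod n 3).symm⟩
  rw [diagChoose_neg_one_three_mul_add]
  interval_cases r
  · rw [if_neg (by omega)]
    norm_num [diagChoose, pow_mul]
  · rw [if_pos (by omega), Nat.add_sub_cancel]
    norm_num [diagChoose, sum_range_succ, pow_mul]
    ring
  · rw [if_neg (by omega)]
    norm_num [diagChoose, sum_range_succ, pow_add, pow_mul]
end

section
/- Let p = 2n+1 be an odd prime. Then for every k with 0 ≤ k ≤ n, binomial(n+k, 2k) is congruent to binomial(2k, k)/(-16)^k modulo p², i.e., (-16)^k * binomial(n+k, 2k) ≡ binomial(2k, k) (mod p²). -/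
/-!
Write `a k = (-16)^k * C(n+k, 2k)` and `c k = C(2k, k)`. Both satisfy first-order recurrences:
`(2k+1)(2k+2) c (k+1) = 4 (2k+1)^2 c k` and `(2k+1)(2k+2) a (k+1) = -4 * 4(n+k+1)(n-k) a k`.
Since `4(n+k+1)(n-k) = p^2 - (2k+1)^2 ≡ -(2k+1)^2 (mod p^2)`, the two recurrences agree
modulo `p^2`, and for `k < n` the factor `(2k+1)(2k+2)` is prime to `p = 2n+1`, so it can be
cancelled; induct on `k`.
-/

theorem Int.ModEq.cancel_right_of_isCoprime {m a b c : ℤ} (hmc : IsCoprime m c)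
    (h : a * c ≡ b * c [ZMOD m]) : a ≡ b [ZMOD m] := by
  rw [Int.modEq_iff_dvd, ← sub_mul] at *
  exact hmc.dvd_of_dvd_mul_right h

theorem Nat.choose_add_add_one_two_mul_add_two_mul (n k : ℕ) :
    (n + k + 1).choose (2 * k + 2) * ((2 * k + 1) * (2 * k + 2)) =
      (n + k).choose (2 * k) * ((n + k + 1) * (n - k)) :=
  calc (n + k + 1).choose (2 * k + 2) * ((2 * k + 1) * (2 * k + 2))
      = (n + k + 1).choose (2 * k + 1 + 1) * (2 * k + 1 + 1) * (2 * k + 1) := by ring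
    _ = (n + k + 1) * ((n + k).choose (2 * k + 1) * (2 * k + 1)) := by
      rw [← Nat.add_one_mul_choose_eq]; ring
    _ = (n + k).choose (2 * k) * ((n + k + 1) * (n - k)) := by
      rw [Nat.choose_succ_right_eq, show n + k - 2 * k = n - k by omega]; ring

theorem four_mul_add_one_mul_sub_modEq (n k : ℤ) :
    4 * ((n + k + 1) * (n - k)) ≡ -(2 * k + 1) ^ 2 [ZMOD (2 * n + 1) ^ 2] :=
  Int.modEq_iff_dvd.2 ⟨-1, by ring⟩

theorem isCoprime_sq_of_lt_prime {p m : ℕ} (hp : p.Prime) (hm : m ≠ 0) (hmp : m < p) :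
    IsCoprime ((p : ℤ) ^ 2) m := by
  exact_mod_cast Nat.isCoprime_iff_coprime.2 ((Nat.coprime_of_lt_prime hm hmp hp).pow_left 2)

theorem stmt_2_general (p n : ℕ) (hp : p.Prime) (hpn : p = 2 * n + 1)
    (k : ℕ) (hk : k ≤ n) :
    ((-16 : ℤ) ^ k * ((n + k).choose (2 * k)) : ℤ) ≡
      ((2 * k).choose k : ℤ) [ZMOD ((p : ℤ) ^ 2)] := by
  subst hpn
  induction k with
  | zero => simp
  | succ k ih =>
    have hkn : k ≤ n := by omega
    have hprime :
        IsCoprime (((2 * n + 1 : ℕ) : ℤ) ^ 2) (((2 * k + 1 : ℕ) : ℤ) * ((2 * k + 2 : ℕ) : ℤ)) :=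
      (isCoprime_sq_of_lt_prime hp (by omega) (by omega)).mul_right
        (isCoprime_sq_of_lt_prime hp (by omega) (by omega))
    refine Int.ModEq.cancel_right_of_isCoprime hprime ?_
    have hchoose := congrArg (Nat.cast : ℕ → ℤ) (Nat.choose_add_add_one_two_mul_add_two_mul n k)
    have hcentral := congrArg (Nat.cast : ℕ → ℤ) (Nat.succ_mul_centralBinom_succ k)
    push_cast [Nat.cast_sub hkn, Nat.centralBinom] at hchoose hcentral ⊢
    calc (-16 : ℤ) ^ (k + 1) * ((n + (k + 1)).choose (2 * (k + 1)) : ℤ)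
          * ((2 * k + 1) * (2 * k + 2))
        = -4 * ((-16) ^ k * ((n + k).choose (2 * k) : ℤ)) * (4 * ((n + k + 1) * (n - k))) := by
          rw [show n + (k + 1) = n + k + 1 by ring, show 2 * (k + 1) = 2 * k + 2 by ring]
          linear_combination (-16 : ℤ) ^ (k + 1) * hchoose
      _ ≡ -4 * ((2 * k).choose k : ℤ) * (-(2 * k + 1) ^ 2) [ZMOD (2 * n + 1) ^ 2] :=
          ((ih hkn).mul_left _).mul (four_mul_add_one_mul_sub_modEq n k)
      _ = ((2 * (k + 1)).choose (k + 1) : ℤ) * ((2 * k + 1) * (2 * k + 2)) := by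
          linear_combination -2 * (2 * (k : ℤ) + 1) * hcentral

theorem stmt_2 (p n : ℕ) (hp : p.Prime) (hodd : Odd p) (hpn : p = 2 * n + 1)
    (k : ℕ) (hk : k ≤ n) :
    ((-16 : ℤ) ^ k * ((n + k).choose (2 * k)) : ℤ) ≡
      ((2 * k).choose k : ℤ) [ZMOD ((p : ℤ) ^ 2)] :=
  stmt_2_general p n hp hpn k hk
end

section
/- Let p be an odd prime. Then the sum over k from 1 to (p-1)/2 of 4^k/(k * binomial(2k,k)) is congruent to 2*((-1)^((p-1)/2) - 1) modulo p. -/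
/-!
The recursion `(k + 1) C(k + 1) = 2 (2k + 1) C(k)` for the central binomial coefficients
`C(k)` makes the summand telescope: `4^k / (k C(k)) = 2 (4^k / C(k) - 4^(k-1) / C(k-1))`.
Hence the sum is `2 (4^m / C(m) - 1)` with `m = (p - 1) / 2`. Modulo `p` we have
`4^m = 2^(p-1) = 1` by Fermat, and `C(m) = (p-1).choose m = (-1)^m`.
-/

open Finset Nat

section Field

variable {K : Type*} [Field K]

theorem four_pow_div_succ_mul_centralBinom_succ (j : ℕ)
    (h : ((j + 1 : ℕ) : K) * (j + 1).centralBinom ≠ 0) :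
    (4 : K) ^ (j + 1) / ((j + 1 : ℕ) * (j + 1).centralBinom) =
      2 * ((4 : K) ^ (j + 1) / (j + 1).centralBinom - 4 ^ j / j.centralBinom) := by
  have hrel : ((j + 1 : ℕ) : K) * (j + 1).centralBinom = 2 * (2 * j + 1) * j.centralBinom := by
    exact_mod_cast congrArg (Nat.cast : ℕ → K) (succ_mul_centralBinom_succ j)
  have hc : (j.centralBinom : K) ≠ 0 := right_ne_zero_of_mul (hrel ▸ h)
  have hj : ((j + 1 : ℕ) : K) ≠ 0 := left_ne_zero_of_mul h
  have hj1 : ((j + 1).centralBinom : K) ≠ 0 := right_ne_zero_of_mul h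
  field_simp
  push_cast at hrel ⊢
  linear_combination (2 * (4 : K) ^ j) * hrel

theorem sum_Icc_four_pow_div_mul_centralBinom (m : ℕ)
    (h : ∀ k ∈ Icc 1 m, (k : K) * k.centralBinom ≠ 0) :
    ∑ k ∈ Icc 1 m, (4 : K) ^ k / (k * k.centralBinom) = 2 * (4 ^ m / m.centralBinom - 1) := by
  induction m with
  | zero => simp
  | succ m ih =>
    rw [sum_Icc_succ_top (by omega), ih fun k hk ↦ h k (Icc_subset_Icc_right m.le_succ hk),
      four_pow_div_succ_mul_centralBinom_succ m (h _ (right_mem_Icc.mpr (by omega)))]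
    ring

end Field

namespace ZMod

theorem natCast_choose_pred {p k : ℕ} [Fact p.Prime] (hk : k < p) :
    ((p - 1).choose k : ZMod p) = (-1) ^ k := by
  have hfac : (k ! : ZMod p) ≠ 0 := by
    rw [Ne, natCast_eq_zero_iff, (Fact.out : p.Prime).dvd_factorial]
    omega
  have := cast_descFactorial (p := p) hk.le
  rw [descFactorial_eq_factorial_mul_choose, Nat.cast_mul, mul_comm] at this
  exact mul_right_cancel₀ hfac this

theorem natCast_mul_centralBinom_ne_zero {p k : ℕ} (hp : p.Prime) (hk0 : 0 < k) (hk : 2 * k < p) :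
    (k : ZMod p) * k.centralBinom ≠ 0 := by
  rw [← Nat.cast_mul, Ne, natCast_eq_zero_iff, hp.dvd_mul, not_or, centralBinom_eq_two_mul_choose]
  exact ⟨Nat.not_dvd_of_pos_of_lt hk0 (by omega),
    hp.coprime_iff_not_dvd.mp (hp.coprime_choose_of_lt hk (by omega))⟩

end ZMod

theorem stmt_3 (p : ℕ) (hp : p.Prime) (hodd : Odd p) :
    ∑ k ∈ Finset.Icc 1 ((p - 1) / 2),
      (4 : ZMod p) ^ k * ((k : ZMod p) * ((2 * k).choose k : ZMod p))⁻¹ =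
    2 * ((-1 : ZMod p) ^ ((p - 1) / 2) - 1) := by
  have := Fact.mk hp
  obtain ⟨hp3, h2m⟩ : 3 ≤ p ∧ 2 * ((p - 1) / 2) = p - 1 := by
    obtain ⟨t, rfl⟩ := hodd
    have := hp.two_le
    omega
  have h4m : (4 : ZMod p) ^ ((p - 1) / 2) = 1 := by
    have h2 : (2 : ZMod p) ≠ 0 := by
      rw [← Nat.cast_ofNat, Ne, ZMod.natCast_eq_zero_iff]
      exact Nat.not_dvd_of_pos_of_lt two_pos (by omega)
    rw [show (4 : ZMod p) = 2 ^ 2 by norm_num, ← pow_mul, h2m, ZMod.pow_card_sub_one_eq_one h2]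
  simp_rw [← div_eq_mul_inv, ← centralBinom_eq_two_mul_choose]
  rw [sum_Icc_four_pow_div_mul_centralBinom _ fun k hk ↦
      ZMod.natCast_mul_centralBinom_ne_zero hp (mem_Icc.mp hk).1 (by grind),
    centralBinom_eq_two_mul_choose, h2m, ZMod.natCast_choose_pred (by omega), h4m,
    one_div, ← inv_pow, ZMod.inv_neg_one]
end

section
/- For every positive integer n, the sum over k from 1 to n of 2^(2k-1)/(k * binomial(2k,k)) equals 2^(2n)/binomial(2n,n) - 1. -/
/-!
The sum telescopes: with `a k = 2 ^ (2 * k) / centralBinom k`, the recurrence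
`(k + 1) * centralBinom (k + 1) = 2 * (2 * k + 1) * centralBinom k` gives
`a (k + 1) - a k = 2 ^ (2 * k + 1) / ((k + 1) * centralBinom (k + 1))`.
-/

open Nat

lemma two_pow_div_centralBinom_succ_sub (k : ℕ) :
    (2 : ℚ) ^ (2 * (k + 1)) / centralBinom (k + 1) - 2 ^ (2 * k) / centralBinom k =
      2 ^ (2 * k + 1) / ((k + 1) * centralBinom (k + 1)) := by
  have hrec : ((k : ℚ) + 1) * centralBinom (k + 1) = 2 * (2 * k + 1) * centralBinom k := by
    exact_mod_cast succ_mul_centralBinom_succ k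
  have hk : (centralBinom k : ℚ) ≠ 0 := by exact_mod_cast centralBinom_ne_zero k
  have hk1 : (centralBinom (k + 1) : ℚ) ≠ 0 := by exact_mod_cast centralBinom_ne_zero (k + 1)
  field_simp
  linear_combination (-(2 : ℚ) ^ (2 * k)) * hrec

theorem stmt_4_general (n : ℕ) :
    ∑ k ∈ Finset.Icc 1 n,
      (2 : ℚ) ^ (2 * k - 1) / (k * ((2 * k).choose k : ℚ)) =
    (2 : ℚ) ^ (2 * n) / ((2 * n).choose n : ℚ) - 1 := by
  simp only [← centralBinom_eq_two_mul_choose]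
  induction n with
  | zero => simp
  | succ m ih =>
    rw [Finset.sum_Icc_succ_top (by omega), ih, show 2 * (m + 1) - 1 = 2 * m + 1 by omega]
    push_cast
    linarith [two_pow_div_centralBinom_succ_sub m]

theorem stmt_4 (n : ℕ) (hn : 1 ≤ n) :
    ∑ k ∈ Finset.Icc 1 n,
      (2 : ℚ) ^ (2 * k - 1) / (k * ((2 * k).choose k : ℚ)) =
    (2 : ℚ) ^ (2 * n) / ((2 * n).choose n : ℚ) - 1 :=
  stmt_4_general n
end

section
/- For every nonnegative integer n, the sum over k from 0 to n of (-1)^k * binomial(2n-k, k) equals 1 if n ≡ 0 or 1 (mod 3), and equals -1 if n ≡ 2 (mod 3). -/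
/-!
The sums `F x m = ∑ₖ xᵏ (m - k choose k)` (`diagChooseSum`) satisfy the Fibonacci-type recurrence
`F x (m + 2) = F x (m + 1) + x F x m` (Pascal's rule). At `x = -1` this gives
`F (m + 3) = -F m`, so `F` has period 6 and `F (2n)` has period 3 in `n`; the
sum in the theorem is `F (2n)` because its terms with `k > n` vanish.
-/

open Finset

section DiagChooseSum

variable {R : Type*}

def diagChooseSum [CommSemiring R] (x : R) (m : ℕ) : R :=
  ∑ p ∈ antidiagonal m, x ^ p.1 * (p.2.choose p.1 : R)

theorem diagChooseSum_eq_sum_range [CommSemiring R] (x : R) (m : ℕ) :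
    diagChooseSum x m = ∑ k ∈ range (m + 1), x ^ k * ((m - k).choose k : R) :=
  Nat.sum_antidiagonal_eq_sum_range_succ (fun i j => x ^ i * (j.choose i : R)) m

theorem diagChooseSum_two_mul [CommSemiring R] (x : R) (n : ℕ) :
    diagChooseSum x (2 * n) = ∑ k ∈ range (n + 1), x ^ k * ((2 * n - k).choose k : R) := by
  rw [diagChooseSum_eq_sum_range]
  refine (sum_subset (range_subset_range.2 (by omega)) fun k hk hkn => ?_).symm
  simp only [mem_range, not_lt] at hk hkn
  rw [Nat.choose_eq_zero_of_lt (by omega), Nat.cast_zero, mul_zero]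

theorem diagChooseSum_add_two [CommSemiring R] (x : R) (m : ℕ) :
    diagChooseSum x (m + 2) = diagChooseSum x (m + 1) + x * diagChooseSum x m := by
  rw [diagChooseSum, Nat.sum_antidiagonal_succ', Nat.sum_antidiagonal_succ, diagChooseSum,
    Nat.sum_antidiagonal_succ, diagChooseSum, mul_sum]
  simp only [Nat.choose_succ_succ, Nat.choose_zero_right, Nat.choose_zero_succ, Nat.cast_add,
    Nat.cast_zero, Nat.cast_one, mul_zero, mul_add, sum_add_distrib, pow_succ', mul_assoc,
    Nat.succ_eq_add_one]
  ring

theorem diagChooseSum_neg_one_add_three [CommRing R] (m : ℕ) :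
    diagChooseSum (-1 : R) (m + 3) = -diagChooseSum (-1 : R) m := by
  rw [diagChooseSum_add_two, diagChooseSum_add_two]
  ring

theorem diagChooseSum_neg_one_add_six_mul [CommRing R] (m q : ℕ) :
    diagChooseSum (-1 : R) (m + 6 * q) = diagChooseSum (-1 : R) m := by
  induction q with
  | zero => rfl
  | succ q ih =>
    rw [show m + 6 * (q + 1) = m + 6 * q + 3 + 3 by ring, diagChooseSum_neg_one_add_three,
      diagChooseSum_neg_one_add_three, neg_neg, ih]

theorem diagChooseSum_neg_one_two_mul [CommRing R] (n : ℕ) :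
    diagChooseSum (-1 : R) (2 * n) = if n % 3 = 0 then 1 else if n % 3 = 1 then 0 else -1 := by
  rw [show 2 * n = 2 * (n % 3) + 6 * (n / 3) by omega, diagChooseSum_neg_one_add_six_mul]
  have hr : n % 3 < 3 := Nat.mod_lt n (by norm_num)
  interval_cases n % 3 <;>
    norm_num [diagChooseSum_eq_sum_range, sum_range_succ, Nat.choose_eq_zero_of_lt]

end DiagChooseSum

theorem stmt_6 (n : ℕ) :
    ∑ k ∈ Finset.range (n + 1), (-1 : ℤ) ^ k * ((2 * n - k).choose k : ℤ) =
    if n % 3 = 0 then 1 else if n % 3 = 1 then 0 else -1 := by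
  rw [← diagChooseSum_two_mul, diagChooseSum_neg_one_two_mul]
end

section
/- For every nonnegative integer n, the sum over k from 0 to n of binomial(2n-k, k) / (-4)^k equals (2n+1)/4^n. -/
/-! The sums `f m = ∑_{i + j = m} C(i, j) x ^ j` satisfy the Fibonacci-type recurrence
`f (m + 2) = f (m + 1) + x f m` (Pascal's rule). For `x = -1/4` its characteristic polynomial
`t² - t + 1/4` has the double root `1/2`, so `f m = (m + 1) / 2 ^ m`; the theorem is the case
`m = 2n`, the terms with `k > n` vanishing because then `2n - k < k`. -/

open Finset

section DiagonalChooseSum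

variable {R : Type*} [CommSemiring R]

def diagonalChooseSum (x : R) (m : ℕ) : R :=
  ∑ p ∈ antidiagonal m, (p.1.choose p.2 : R) * x ^ p.2

theorem diagonalChooseSum_add_two (x : R) (m : ℕ) :
    diagonalChooseSum x (m + 2) = diagonalChooseSum x (m + 1) + x * diagonalChooseSum x m := by
  simp only [diagonalChooseSum, Nat.antidiagonal_succ_succ', Nat.antidiagonal_succ']
  simp [Nat.choose_succ_succ, add_mul, sum_add_distrib, mul_sum, pow_succ', mul_left_comm x]
  abel

theorem diagonalChooseSum_eq_sum_range (x : R) (m : ℕ) :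
    diagonalChooseSum x m = ∑ k ∈ range (m + 1), ((m - k).choose k : R) * x ^ k := by
  rw [diagonalChooseSum, ← Nat.sum_antidiagonal_swap]
  exact Nat.sum_antidiagonal_eq_sum_range_succ (fun j i => (i.choose j : R) * x ^ j) m

theorem sum_range_choose_sub_eq_diagonalChooseSum (x : R) (n : ℕ) :
    ∑ k ∈ range (n + 1), ((2 * n - k).choose k : R) * x ^ k = diagonalChooseSum x (2 * n) := by
  rw [diagonalChooseSum_eq_sum_range]
  refine sum_subset (fun k hk => by simp only [mem_range] at *; omega) fun k hk hkn => ?_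
  simp only [mem_range] at hk hkn
  rw [Nat.choose_eq_zero_of_lt (by omega), Nat.cast_zero, zero_mul]

end DiagonalChooseSum

theorem diagonalChooseSum_neg_sq {R : Type*} [CommRing R] {r : R} (hr : 2 * r = 1) (m : ℕ) :
    diagonalChooseSum (-r ^ 2) m = (m + 1) * r ^ m := by
  induction m using Nat.twoStepInduction with
  | zero => simp [diagonalChooseSum]
  | one => simp [diagonalChooseSum, ← hr, Nat.antidiagonal_succ]; ring
  | more m ih₀ ih₁ =>
    rw [diagonalChooseSum_add_two, ih₀, ih₁]
    push_cast
    linear_combination (-(m + 2 : R) * r ^ (m + 1)) * hr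

theorem stmt_7 (n : ℕ) :
    ∑ k ∈ Finset.range (n + 1), ((2 * n - k).choose k : ℚ) / (-4 : ℚ) ^ k =
    (2 * n + 1) / 4 ^ n := by
  have hterm : ∀ k : ℕ, ((2 * n - k).choose k : ℚ) / (-4) ^ k =
      ((2 * n - k).choose k : ℚ) * (-(1 / 2) ^ 2) ^ k := fun k => by
    rw [div_eq_mul_inv, ← inv_pow]; norm_num
  rw [sum_congr rfl fun k _ => hterm k, sum_range_choose_sub_eq_diagonalChooseSum,
    diagonalChooseSum_neg_sq (by norm_num), pow_mul]
  norm_num [div_eq_mul_inv, one_div_pow]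
end

section
/- Let p > 3 be a prime. Then the sum over k from 1 to floor(p/6) of (-1)^k / k² is congruent to (-1)^((p-1)/2) * 10 * E_{p-3} modulo p, where E_m denotes the m-th Euler number. -/
/-!
Put `A_n(y) = ∑ₖ C(n,k) yᵏ E_{n-k}`, so that `2⁻ⁿ A_n(2x - 1)` is the Euler polynomial `E_n(x)`.
The recursion for the Euler numbers says exactly that `A_n(w + 1) + A_n(w - 1) = 2 wⁿ`, and
telescoping gives `2ⁿ⁺¹ ∑_{j ≤ N} (-1)ʲ jⁿ = (-1)ᴺ A_n(2N + 1)` for even `n > 0`.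

Over a field of odd characteristic, a function with `f (x + 1) + f x = c xⁿ` is determined by this
equation (the difference of two solutions changes sign under `x ↦ x + 1` and has period `char K`).
Hence the multiplication formula `f x = 3ⁿ (f (x/3) - f ((x+1)/3) + f ((x+2)/3))`, which at
`x = 1/2`, since `A_n` is even, gives `2 · 3ⁿ A_n(2/3) = (1 + 3ⁿ) E_n`.

For `n = p - 3` and `N = ⌊p/6⌋` one has `2N + 1 ≡ ±2/3 (mod p)`, and Fermat's little theorem
turns `jⁿ`, `2ⁿ`, `3ⁿ` into `j⁻²`, `1/4`, `1/9`.
-/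

open Finset

section Appell

variable {R : Type*} [CommRing R]

def appell (a : ℕ → R) (n : ℕ) (y : R) : R :=
  ∑ k ∈ range (n + 1), (n.choose k : R) * y ^ k * a (n - k)

@[simp]
lemma appell_zero_right (a : ℕ → R) (n : ℕ) : appell a n 0 = a n := by
  rw [appell, sum_eq_single 0 (fun k _ hk => by simp [hk]) (by simp)]
  simp

lemma appell_add (a : ℕ → R) (n : ℕ) (x y : R) :
    appell a n (x + y) = ∑ i ∈ range (n + 1), (n.choose i : R) * x ^ i * appell a (n - i) y := by
  have hflip := sum_range_diag_flip (n + 1) fun i j =>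
    (n.choose i : R) * x ^ i * ((n - i).choose j * y ^ j * a (n - i - j))
  simp only [appell, mul_sum]
  convert hflip using 2 with k _ i hi
  · rw [add_pow, mul_sum, sum_mul]
    refine sum_congr rfl fun i hi => ?_
    have hik : i ≤ k := Nat.lt_succ_iff.mp (mem_range.mp hi)
    have hchoose : (n.choose k : R) * k.choose i = n.choose i * (n - i).choose (k - i) := by
      rw [← Nat.cast_mul, ← Nat.cast_mul, Nat.choose_mul hik]
    rw [Nat.sub_sub, Nat.add_sub_cancel' hik]
    linear_combination x ^ i * y ^ (k - i) * a (n - k) * hchoose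
  · rw [Nat.sub_add_comm (Nat.lt_succ_iff.mp (mem_range.mp hi))]

lemma appell_neg (a : ℕ → R) {n : ℕ} (hn : Even n) (ha : ∀ k, Odd k → a k = 0) (y : R) :
    appell a n (-y) = appell a n y := by
  refine sum_congr rfl fun k hk => ?_
  rcases Nat.even_or_odd k with hk' | hk'
  · rw [hk'.neg_pow]
  · have : Odd (n - k) := by
      rw [Nat.odd_sub' (Nat.lt_succ_iff.mp (mem_range.mp hk))]
      exact iff_of_true hk' hn
    simp [ha _ this]

structure IsEulerSeq (e : ℕ → R) : Prop where
  zero : e 0 = 1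
  sum_choose_even : ∀ n, 1 ≤ n →
    ∑ k ∈ range (n + 1), (if 2 ∣ k then (n.choose k : R) * e (n - k) else 0) = 0

namespace IsEulerSeq

variable {e : ℕ → R}

lemma map {S : Type*} [CommRing S] (he : IsEulerSeq e) (f : R →+* S) : IsEulerSeq (f ∘ e) where
  zero := by simp [he.zero]
  sum_choose_even n hn := by
    simpa [apply_ite f] using congrArg f (he.sum_choose_even n hn)

lemma eq_zero_of_odd (he : IsEulerSeq e) {n : ℕ} (hn : Odd n) : e n = 0 := by
  induction n using Nat.strong_induction_on with
  | _ n ih =>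
    have hsum := he.sum_choose_even n hn.pos
    rwa [sum_eq_single 0 (fun k hk hk0 => ?_) (by simp), if_pos (dvd_zero 2),
      Nat.choose_zero_right, Nat.cast_one, one_mul, Nat.sub_zero] at hsum
    have hkn := Nat.lt_succ_iff.mp (mem_range.mp hk)
    split_ifs with h2k
    · rw [ih (n - k) (by omega) (by rw [Nat.odd_iff] at hn ⊢; omega), mul_zero]
    · rfl

lemma appell_one_add_appell_neg_one (he : IsEulerSeq e) (n : ℕ) :
    appell e n 1 + appell e n (-1) = 2 * 0 ^ n := by
  rcases Nat.eq_zero_or_pos n with rfl | hn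
  · simp [appell, he.zero, one_add_one_eq_two]
  rw [zero_pow hn.ne', mul_zero, ← mul_zero 2, ← he.sum_choose_even n hn, mul_sum, appell, appell,
    ← sum_add_distrib]
  refine sum_congr rfl fun k _ => ?_
  rcases Nat.even_or_odd k with hk | hk
  · rw [if_pos hk.two_dvd, hk.neg_one_pow]
    ring
  · rw [if_neg (Nat.not_even_iff_odd.mpr hk ∘ even_iff_two_dvd.mpr), hk.neg_one_pow]
    ring

lemma appell_add_one_add_appell_sub_one (he : IsEulerSeq e) (n : ℕ) (w : R) :
    appell e n (w + 1) + appell e n (w - 1) = 2 * w ^ n := by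
  rw [sub_eq_add_neg, appell_add, appell_add, ← sum_add_distrib,
    sum_eq_single n (fun i hi hin => ?_) (by simp)]
  · simp [← mul_add, he.appell_one_add_appell_neg_one, mul_comm]
  · have : n - i ≠ 0 := by have := mem_range.mp hi; omega
    rw [← mul_add, he.appell_one_add_appell_neg_one, zero_pow this, mul_zero, mul_zero]

end IsEulerSeq

end Appell

lemma sum_range_neg_one_pow_mul_add {R : Type*} [CommRing R] (u : ℕ → R) (N : ℕ) :
    ∑ j ∈ range (N + 1), (-1) ^ j * (u (j + 1) + u j) = u 0 + (-1) ^ N * u (N + 1) := by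
  induction N with
  | zero => simp [add_comm]
  | succ N ih =>
    rw [sum_range_succ, ih, pow_succ]
    ring

section OddChar

variable {K : Type*} [Field K]

lemma two_ne_zero_of_odd_ringChar (hK : Odd (ringChar K)) : (2 : K) ≠ 0 :=
  Ring.two_ne_zero fun h => by rw [h] at hK; exact absurd hK (by decide)

lemma eq_of_forall_add_one_add_eq (hK : Odd (ringChar K)) {f g : K → K}
    (h : ∀ x, f (x + 1) + f x = g (x + 1) + g x) : f = g := by
  funext x
  have hshift : ∀ k : ℕ, f (x + k) - g (x + k) = (-1) ^ k * (f x - g x) := by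
    intro k
    induction k with
    | zero => simp
    | succ k ih =>
      rw [Nat.cast_succ, ← add_assoc, pow_succ]
      linear_combination h (x + k) - ih
  have hneg := hshift (ringChar K)
  rw [ringChar.Nat.cast_ringChar, add_zero, hK.neg_one_pow] at hneg
  have : 2 * (f x - g x) = 0 := by linear_combination hneg
  exact sub_eq_zero.mp ((mul_eq_zero.mp this).resolve_left (two_ne_zero_of_odd_ringChar hK))

lemma eq_pow_mul_sum_range_neg_one_pow (hK : Odd (ringChar K)) {m : ℕ} (hm : Odd m)
    (hm0 : (m : K) ≠ 0) {n : ℕ} {c : K} {f : K → K} (hf : ∀ x, f (x + 1) + f x = c * x ^ n)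
    (x : K) : f x = m ^ n * ∑ j ∈ range m, (-1) ^ j * f ((x + j) / m) := by
  set g : K → K := fun y => m ^ n * ∑ j ∈ range m, (-1) ^ j * f ((y + j) / m)
  refine congrFun (eq_of_forall_add_one_add_eq hK (g := g) fun y => ?_) x
  obtain ⟨M, rfl⟩ := hm
  have hshift : ∀ j : ℕ, (y + 1 + j) / ↑(2 * M + 1) = (y + ↑(j + 1)) / ↑(2 * M + 1) := by
    intro j; push_cast; ring
  have hlast : (y + ↑(2 * M + 1)) / ↑(2 * M + 1) = y / ↑(2 * M + 1) + 1 := by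
    field_simp
  simp only [g, hshift, hf, ← mul_add, ← sum_add_distrib]
  rw [sum_range_neg_one_pow_mul_add (fun j => f ((y + j) / ↑(2 * M + 1))) (2 * M), hlast,
    (even_two_mul M).neg_one_pow, Nat.cast_zero, add_zero, one_mul, add_comm (f _), hf, div_pow]
  field_simp

end OddChar

namespace IsEulerSeq

variable {K : Type*} [Field K] {e : ℕ → K}

lemma appell_neg_one_eq_zero (he : IsEulerSeq e) (h2 : (2 : K) ≠ 0) {n : ℕ} (hn : Even n)
    (hn0 : n ≠ 0) : appell e n (-1) = 0 := by
  have h := he.appell_one_add_appell_neg_one n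
  rw [← appell_neg e hn (fun _ => he.eq_zero_of_odd), ← two_mul, zero_pow hn0,
    mul_zero] at h
  exact (mul_eq_zero.mp h).resolve_left h2

lemma two_pow_mul_sum_range_neg_one_pow_mul_pow (he : IsEulerSeq e) (h2 : (2 : K) ≠ 0) {n : ℕ}
    (hn : Even n) (hn0 : n ≠ 0) (N : ℕ) :
    2 ^ (n + 1) * ∑ j ∈ range (N + 1), (-1) ^ j * (j : K) ^ n =
      (-1) ^ N * appell e n (2 * N + 1) := by
  have hstep (j : ℕ) :
      appell e n (2 * ↑(j + 1) - 1) + appell e n (2 * j - 1) = 2 ^ (n + 1) * (j : K) ^ n := by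
    rw [show (2 : K) * ↑(j + 1) - 1 = 2 * j + 1 by push_cast; ring,
      he.appell_add_one_add_appell_sub_one, mul_pow, pow_succ]
    ring
  have htel := sum_range_neg_one_pow_mul_add (fun j : ℕ => appell e n (2 * j - 1)) N
  simp only [hstep, Nat.cast_zero, mul_zero, zero_sub, he.appell_neg_one_eq_zero h2 hn hn0,
    zero_add] at htel
  rw [mul_sum, show (2 : K) * N + 1 = 2 * ↑(N + 1) - 1 by push_cast; ring, ← htel]
  exact sum_congr rfl fun j _ => by ring

lemma two_mul_three_pow_mul_appell (he : IsEulerSeq e) (hK : Odd (ringChar K)) (h3 : (3 : K) ≠ 0)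
    {n : ℕ} (hn : Even n) : 2 * 3 ^ n * appell e n (2 / 3) = (1 + 3 ^ n) * e n := by
  have h2 := two_ne_zero_of_odd_ringChar hK
  have hf (x : K) :
      appell e n (2 * (x + 1) - 1) + appell e n (2 * x - 1) = 2 ^ (n + 1) * x ^ n := by
    rw [show 2 * (x + 1) - 1 = 2 * x + 1 by ring, he.appell_add_one_add_appell_sub_one, mul_pow,
      pow_succ]
    ring
  have hmul := eq_pow_mul_sum_range_neg_one_pow hK (m := 3) (by decide) (by exact_mod_cast h3)
    (f := fun x => appell e n (2 * x - 1)) hf (1 / 2)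
  simp only [sum_range_succ, sum_range_zero] at hmul
  push_cast at hmul
  rw [show (2 : K) * (1 / 2) - 1 = 0 by field_simp; ring,
    show (2 : K) * ((1 / 2 + 0) / 3) - 1 = -(2 / 3) by field_simp; ring,
    show (2 : K) * ((1 / 2 + 1) / 3) - 1 = 0 by field_simp; ring,
    show (2 : K) * ((1 / 2 + 2) / 3) - 1 = 2 / 3 by field_simp; ring,
    appell_neg e hn (fun _ => he.eq_zero_of_odd), appell_zero_right] at hmul
  linear_combination -hmul

end IsEulerSeq

lemma Nat.Prime.mod_six_eq_one_or_five {p : ℕ} (hp : p.Prime) (h3 : 3 < p) :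
    p % 6 = 1 ∨ p % 6 = 5 := by
  have h2 : ¬ 2 ∣ p := fun h => by
    have := (Nat.prime_dvd_prime_iff_eq Nat.prime_two hp).mp h; omega
  have h3 : ¬ 3 ∣ p := fun h => by
    have := (Nat.prime_dvd_prime_iff_eq Nat.prime_three hp).mp h; omega
  omega

namespace ZMod

variable {p : ℕ} [Fact p.Prime]

lemma pow_sub_three_eq_inv_sq (hp : 3 ≤ p) {a : ZMod p} (ha : a ≠ 0) : a ^ (p - 3) = (a ^ 2)⁻¹ :=
  eq_inv_of_mul_eq_one_left <| by
    rw [← pow_add, show p - 3 + 2 = p - 1 by omega, pow_card_sub_one_eq_one ha]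

lemma sum_range_neg_one_pow_mul_pow_sub_three (hp : 3 < p) {N : ℕ} (hN : N < p) :
    ∑ j ∈ range (N + 1), (-1) ^ j * (j : ZMod p) ^ (p - 3) =
      ∑ k ∈ Icc 1 N, (-1) ^ k * ((k : ZMod p) ^ 2)⁻¹ := by
  rw [sum_range_eq_add_Ico _ (by omega : 0 < N + 1), Ico_add_one_right_eq_Icc, Nat.cast_zero,
    zero_pow (by omega), mul_zero, zero_add]
  refine sum_congr rfl fun k hk => ?_
  have hk0 : (k : ZMod p) ≠ 0 := by
    rw [Ne, natCast_eq_zero_iff]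
    exact Nat.not_dvd_of_pos_of_lt (mem_Icc.mp hk).1 (by have := (mem_Icc.mp hk).2; omega)
  rw [pow_sub_three_eq_inv_sq hp.le hk0]

lemma appell_two_mul_div_six_add_one (a : ℕ → ZMod p) {n : ℕ} (hn : Even n)
    (ha : ∀ k, Odd k → a k = 0) (h3 : (3 : ZMod p) ≠ 0) (hp : p % 6 = 1 ∨ p % 6 = 5) :
    appell a n (2 * (p / 6 : ℕ) + 1) = appell a n (2 / 3) := by
  rcases hp with hp | hp
  · have h : ((3 * (2 * (p / 6) + 1) : ℕ) : ZMod p) = ((p + 2 : ℕ) : ZMod p) := by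
      rw [show 3 * (2 * (p / 6) + 1) = p + 2 by omega]
    push_cast [natCast_self] at h
    rw [show (2 * (p / 6 : ℕ) + 1 : ZMod p) = 2 / 3 by rw [eq_div_iff h3]; linear_combination h]
  · have h : ((3 * (2 * (p / 6) + 1) + 2 : ℕ) : ZMod p) = ((p : ℕ) : ZMod p) := by
      rw [show 3 * (2 * (p / 6) + 1) + 2 = p by omega]
    push_cast [natCast_self] at h
    rw [← appell_neg a hn ha,
      show (2 * (p / 6 : ℕ) + 1 : ZMod p) = -(2 / 3) by field_simp; linear_combination h, neg_neg]

end ZMod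

theorem stmt_8 (p : ℕ) (hp : p.Prime) (hp3 : 3 < p)
    (E : ℕ → ℤ) (hE0 : E 0 = 1)
    (hE : ∀ n : ℕ, 1 ≤ n →
      ∑ k ∈ Finset.range (n + 1),
        (if 2 ∣ k then (n.choose k : ℤ) * E (n - k) else 0) = 0) :
    ∑ k ∈ Finset.Icc 1 (p / 6), (-1 : ZMod p) ^ k * ((k : ZMod p) ^ 2)⁻¹ =
    (-1 : ZMod p) ^ ((p - 1) / 2) * 10 * (E (p - 3) : ZMod p) := by
  have := Fact.mk hp
  have hp6 := hp.mod_six_eq_one_or_five hp3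
  have hK : Odd (ringChar (ZMod p)) := by rw [ZMod.ringChar_zmod_n, Nat.odd_iff]; omega
  have h2 := two_ne_zero_of_odd_ringChar hK
  have h3 : (3 : ZMod p) ≠ 0 := by
    rw [show (3 : ZMod p) = (3 : ℕ) by norm_num, Ne, ZMod.natCast_eq_zero_iff]
    exact Nat.not_dvd_of_pos_of_lt (by norm_num) hp3
  have he : IsEulerSeq (fun k => (E k : ZMod p)) :=
    (IsEulerSeq.mk hE0 hE).map (Int.castRingHom (ZMod p))
  have hn : Even (p - 3) := by rw [Nat.even_iff]; omega
  have halt := he.two_pow_mul_sum_range_neg_one_pow_mul_pow h2 hn (by omega) (p / 6)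
  have hsix := he.two_mul_three_pow_mul_appell hK h3 hn
  rw [ZMod.sum_range_neg_one_pow_mul_pow_sub_three hp3 (by omega),
    ZMod.appell_two_mul_div_six_add_one _ hn (fun _ => he.eq_zero_of_odd) h3 hp6, pow_succ,
    ZMod.pow_sub_three_eq_inv_sq hp3.le h2,
    neg_one_pow_congr (by simp only [Nat.even_iff]; omega : Even (p / 6) ↔ Even ((p - 1) / 2))]
    at halt
  rw [ZMod.pow_sub_three_eq_inv_sq hp3.le h3] at hsix
  field_simp at halt hsix ⊢
  linear_combination halt + (-1 : ZMod p) ^ ((p - 1) / 2) * hsix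
end

section
/- Let p > 3 be a prime. Then the sum over k from 0 to (p-3)/2 of binomial(2k,k)/((2k+1)*16^k) is congruent to 0 modulo p². -/
/-!
Write `p = 2m + 1`. Since `4 (m - k) (m + k + 1) = p² - (2k + 1)²`, the numbers `C(2k, k)` and
`(-16)^k C(m + k, 2k)` satisfy the same first-order recurrence modulo `p²`, so
`C(2k, k) / 16^k ≡ (-1)^k C(m + k, 2k) (mod p²)` for `k ≤ m`. The sum thus becomes
`∑_{k < m} (-1)^k C(m + k, 2k) / (2k + 1)`, which vanishes already in `ℚ` when `3 ∤ p`: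
multiplied by `2m + 1` it is `A m + 2 B m - (-1)^m`, where `A n = ∑ (-1)^k C(n + k, 2k)` and
`B n = ∑ (-1)^k C(n + k, 2k + 1)` satisfy `A (n + 1) = -B n`, `B (n + 1) = A n + B n`, hence
change sign under `n ↦ n + 3`.
-/

open Finset

theorem eq_of_mul_succ_eq {M : Type*} [Monoid M] {a c u v : ℕ → M} {K : ℕ}
    (ha : ∀ k < K, IsUnit (a k)) (hu : ∀ k < K, a k * u (k + 1) = c k * u k)
    (hv : ∀ k < K, a k * v (k + 1) = c k * v k) (h0 : u 0 = v 0) : ∀ k ≤ K, u k = v k := by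
  intro k hk
  induction k with
  | zero => exact h0
  | succ k ih => exact (ha k hk).mul_left_cancel (by rw [hu k hk, hv k hk, ih (by omega)])

theorem choose_add_succ_two_mul_succ (m k : ℕ) :
    (2 * k + 1) * (2 * k + 2) * (m + (k + 1)).choose (2 * (k + 1)) =
      (m + k + 1) * (m - k) * (m + k).choose (2 * k) := by
  have h₁ := Nat.add_one_mul_choose_eq (m + k) (2 * k + 1)
  have h₂ := Nat.choose_succ_right_eq (m + k) (2 * k)
  rw [show m + k - 2 * k = m - k by omega] at h₂
  rw [show m + (k + 1) = m + k + 1 by omega, show 2 * (k + 1) = 2 * k + 1 + 1 by omega]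
  calc (2 * k + 1) * (2 * k + 2) * (m + k + 1).choose (2 * k + 1 + 1)
      = (2 * k + 1) * ((m + k + 1) * (m + k).choose (2 * k + 1)) := by rw [h₁]; ring
    _ = (m + k + 1) * ((m + k).choose (2 * k + 1) * (2 * k + 1)) := by ring
    _ = (m + k + 1) * (m - k) * (m + k).choose (2 * k) := by rw [h₂]; ring

theorem centralBinom_eq_neg_sixteen_pow_mul_choose {R : Type*} [CommRing R] {m : ℕ}
    (hsq : (2 * m + 1 : R) ^ 2 = 0) (hunit : ∀ k < m, IsUnit ((2 * k + 1) * (2 * k + 2) : R))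
    {k : ℕ} (hk : k ≤ m) : (k.centralBinom : R) = (-16) ^ k * (m + k).choose (2 * k) := by
  refine eq_of_mul_succ_eq (a := fun k => ((2 * k + 1) * (2 * k + 2) : R))
    (c := fun k => 4 * (2 * k + 1) ^ 2) (u := fun k => (k.centralBinom : R))
    (v := fun k => (-16) ^ k * (m + k).choose (2 * k)) hunit (fun k _ => ?_) (fun k hk => ?_)
    (by simp) k hk
  · have h := congrArg (Nat.cast : ℕ → R) (Nat.succ_mul_centralBinom_succ k)
    push_cast at h
    linear_combination (2 * (2 * k + 1) : R) * h
  · have h := congrArg (Nat.cast : ℕ → R) (choose_add_succ_two_mul_succ m k)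
    push_cast [Nat.cast_sub hk.le] at h ⊢
    linear_combination
      (-16 : R) ^ (k + 1) * h - 4 * (-16 : R) ^ k * ((m + k).choose (2 * k) : R) * hsq

def altChooseEven (n : ℕ) : ℤ := ∑ k ∈ range (n + 1), (-1) ^ k * ((n + k).choose (2 * k) : ℤ)

def altChooseOdd (n : ℕ) : ℤ := ∑ k ∈ range (n + 1), (-1) ^ k * ((n + k).choose (2 * k + 1) : ℤ)

theorem altChooseEven_eq_sum_range {n N : ℕ} (h : n + 1 ≤ N) :
    altChooseEven n = ∑ k ∈ range N, (-1) ^ k * ((n + k).choose (2 * k) : ℤ) := by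
  refine (eventually_constant_sum (fun k hk => ?_) h).symm
  rw [Nat.choose_eq_zero_of_lt (by omega), Nat.cast_zero, mul_zero]

theorem altChooseOdd_eq_sum_range {n N : ℕ} (h : n ≤ N) :
    altChooseOdd n = ∑ k ∈ range N, (-1) ^ k * ((n + k).choose (2 * k + 1) : ℤ) := by
  have hvanish : ∀ k ≥ n, (-1) ^ k * ((n + k).choose (2 * k + 1) : ℤ) = 0 := fun k hk => by
    rw [Nat.choose_eq_zero_of_lt (by omega), Nat.cast_zero, mul_zero]
  rw [altChooseOdd, eventually_constant_sum hvanish h, eventually_constant_sum hvanish n.le_succ]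

theorem altChooseOdd_succ (n : ℕ) : altChooseOdd (n + 1) = altChooseEven n + altChooseOdd n := by
  have pascal (k : ℕ) :
      (n + 1 + k).choose (2 * k + 1) = (n + k).choose (2 * k) + (n + k).choose (2 * k + 1) := by
    rw [show n + 1 + k = n + k + 1 by omega, Nat.choose_succ_succ]
  rw [altChooseOdd, altChooseEven_eq_sum_range (N := n + 1 + 1) (by omega),
    altChooseOdd_eq_sum_range (N := n + 1 + 1) (by omega)]
  simp only [pascal, Nat.cast_add, mul_add, sum_add_distrib]

theorem altChooseEven_succ (n : ℕ) : altChooseEven (n + 1) = -altChooseOdd n := by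
  have pascal (k : ℕ) : (n + 1 + (k + 1)).choose (2 * (k + 1)) =
      (n + 1 + k).choose (2 * k + 1) + (n + k + 1).choose (2 * k + 2) := by
    rw [show n + 1 + (k + 1) = n + k + 1 + 1 by omega, show 2 * (k + 1) = 2 * k + 1 + 1 by omega,
      Nat.choose_succ_succ (n + k + 1) (2 * k + 1), show n + 1 + k = n + k + 1 by omega]
  have hA : altChooseEven n =
      1 - ∑ k ∈ range (n + 1), (-1) ^ k * ((n + k + 1).choose (2 * k + 2) : ℤ) := by
    rw [altChooseEven_eq_sum_range (N := n + 1 + 1) (by omega), sum_range_succ']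
    simp [pow_succ, mul_add, add_assoc, sub_eq_neg_add]
  have hB : altChooseOdd (n + 1) =
      ∑ k ∈ range (n + 1), (-1) ^ k * ((n + 1 + k).choose (2 * k + 1) : ℤ) :=
    altChooseOdd_eq_sum_range le_rfl
  rw [altChooseEven, sum_range_succ']
  simp_rw [pascal, Nat.cast_add, mul_add, sum_add_distrib, pow_succ, mul_neg_one, neg_mul,
    sum_neg_distrib, ← hB, pow_zero, mul_zero, Nat.choose_zero_right, Nat.cast_one, one_mul]
  linear_combination -altChooseOdd_succ n - hA

theorem altChooseEven_add_three (n : ℕ) : altChooseEven (n + 3) = -altChooseEven n := by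
  rw [altChooseEven_succ (n + 2), altChooseOdd_succ (n + 1), altChooseEven_succ n,
    altChooseOdd_succ n]
  ring

theorem altChooseOdd_add_three (n : ℕ) : altChooseOdd (n + 3) = -altChooseOdd n := by
  rw [altChooseOdd_succ (n + 2), altChooseEven_succ (n + 1), altChooseOdd_succ (n + 1),
    altChooseEven_succ n]
  ring

theorem altChooseEven_add_two_mul_altChooseOdd {n : ℕ} (hn : n % 3 ≠ 1) :
    altChooseEven n + 2 * altChooseOdd n = (-1) ^ n := by
  induction n using Nat.strong_induction_on with
  | _ n ih =>
    match n, hn with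
    | 0, _ => rfl
    | 2, _ => rfl
    | n + 3, hn =>
      rw [altChooseEven_add_three, altChooseOdd_add_three, pow_add]
      linear_combination -ih n (by omega) (by omega)

theorem sum_range_neg_one_pow_mul_choose_div_eq_zero {m : ℕ} (hm : m % 3 ≠ 1) :
    ∑ k ∈ range m, (-1) ^ k * ((m + k).choose (2 * k) : ℚ) / (2 * k + 1) = 0 := by
  have term : ∀ k ∈ range (m + 1),
      (2 * m + 1 : ℚ) * ((-1) ^ k * (m + k).choose (2 * k) / (2 * k + 1)) =
        (-1) ^ k * (m + k).choose (2 * k) + 2 * ((-1) ^ k * (m + k).choose (2 * k + 1)) := by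
    intro k hk
    have hk : k ≤ m := Nat.lt_succ_iff.mp (mem_range.mp hk)
    have hnat : (m + k).choose (2 * k) * (2 * m + 1) =
        ((m + k).choose (2 * k) + 2 * (m + k).choose (2 * k + 1)) * (2 * k + 1) := by
      have := Nat.choose_succ_right_eq (m + k) (2 * k)
      rw [show m + k - 2 * k = m - k by omega] at this
      rw [add_mul, mul_assoc, this, show 2 * m + 1 = 2 * k + 1 + 2 * (m - k) by omega]
      ring
    have hq : ((m + k).choose (2 * k) * (2 * m + 1) : ℚ) =
        ((m + k).choose (2 * k) + 2 * (m + k).choose (2 * k + 1)) * (2 * k + 1) := by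
      exact_mod_cast hnat
    calc (2 * m + 1 : ℚ) * ((-1) ^ k * (m + k).choose (2 * k) / (2 * k + 1))
        = (-1) ^ k * ((m + k).choose (2 * k) * (2 * m + 1)) / (2 * k + 1) := by ring
      _ = _ := by rw [hq, ← mul_assoc, mul_div_cancel_right₀ _ (by positivity)]; ring
  have hsum := sum_congr rfl term
  rw [← mul_sum, sum_add_distrib, ← mul_sum, sum_range_succ] at hsum
  have hT : ((altChooseEven m + 2 * altChooseOdd m : ℤ) : ℚ) = (-1) ^ m := by
    exact_mod_cast altChooseEven_add_two_mul_altChooseOdd hm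
  push_cast [altChooseEven, altChooseOdd] at hT
  rw [← hT, ← two_mul, Nat.choose_self, Nat.cast_one, mul_one, mul_add,
    mul_div_cancel₀ _ (by positivity), add_eq_right, mul_eq_zero] at hsum
  exact hsum.resolve_left (by positivity)

theorem ZMod.sum_intCast_mul_inv_eq_zero_of_sum_div_eq_zero {ι : Type*} {n : ℕ} {s : Finset ι}
    {a : ι → ℤ} {b : ι → ℕ} (hb : ∀ i ∈ s, IsUnit (b i : ZMod n))
    (h : ∑ i ∈ s, (a i : ℚ) / b i = 0) :
    ∑ i ∈ s, (a i : ZMod n) * (b i : ZMod n)⁻¹ = 0 := by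
  classical
  rcases subsingleton_or_nontrivial (ZMod n) with _ | _
  · exact Subsingleton.elim _ _
  have hb0 : ∀ i ∈ s, (b i : ℚ) ≠ 0 := fun i hi h0 =>
    not_isUnit_zero (M₀ := ZMod n) (by simpa [Nat.cast_eq_zero.mp h0] using hb i hi)
  have hcleared : ∑ i ∈ s, a i * ∏ j ∈ s.erase i, (b j : ℤ) = 0 := by
    have : ((∑ i ∈ s, a i * ∏ j ∈ s.erase i, (b j : ℤ) : ℤ) : ℚ) =
        (∏ j ∈ s, (b j : ℚ)) * ∑ i ∈ s, (a i : ℚ) / b i := by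
      push_cast
      rw [mul_sum]
      refine sum_congr rfl fun i hi => ?_
      rw [← mul_prod_erase s _ hi]
      field_simp [hb0 i hi]
    rw [h, mul_zero] at this
    exact_mod_cast this
  refine (IsUnit.prod_iff.mpr hb).mul_left_cancel ?_
  rw [mul_zero, mul_sum]
  calc ∑ i ∈ s, (∏ j ∈ s, (b j : ZMod n)) * ((a i : ZMod n) * (b i : ZMod n)⁻¹)
      = ∑ i ∈ s, (a i : ZMod n) * (∏ j ∈ s.erase i, (b j : ZMod n)) *
          ((b i : ZMod n) * (b i : ZMod n)⁻¹) :=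
        sum_congr rfl fun i hi => by rw [← mul_prod_erase s _ hi]; ring
    _ = ((∑ i ∈ s, a i * ∏ j ∈ s.erase i, (b j : ℤ) : ℤ) : ZMod n) := by
        push_cast
        exact sum_congr rfl fun i hi => by rw [ZMod.mul_inv_of_unit _ (hb i hi), mul_one]
    _ = 0 := by rw [hcleared, Int.cast_zero]

theorem stmt_10 (p : ℕ) (hp : p.Prime) (hp3 : 3 < p) :
    ∑ k ∈ Finset.range ((p - 3) / 2 + 1),
      ((2 * k).choose k : ZMod (p ^ 2)) * ((2 * k + 1 : ZMod (p ^ 2)) * 16 ^ k)⁻¹ =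
    0 := by
  obtain ⟨m, hpm⟩ : ∃ m, p = 2 * m + 1 := hp.odd_of_ne_two (by omega)
  have hm : m % 3 ≠ 1 := fun h => by
    have := hp.eq_one_or_self_of_dvd 3 (by omega)
    omega
  have hcop {x : ℕ} (h₀ : 0 < x) (h₁ : x < p) : x.Coprime p :=
    (Nat.coprime_of_lt_prime h₀.ne' h₁ hp).symm
  have hunit {x : ℕ} (hx : x.Coprime p) : IsUnit (x : ZMod (p ^ 2)) :=
    (ZMod.isUnit_iff_coprime _ _).2 (hx.pow_right 2)
  have hsq : (2 * m + 1 : ZMod (p ^ 2)) ^ 2 = 0 := by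
    have h := ZMod.natCast_self (p ^ 2)
    rw [hpm] at h ⊢
    exact_mod_cast h
  have hunit_mul (j : ℕ) (hj : j < m) : IsUnit ((2 * j + 1) * (2 * j + 2) : ZMod (p ^ 2)) := by
    exact_mod_cast hunit ((hcop (by omega) (by omega)).mul_left (hcop (by omega) (by omega)))
  have h16 : Nat.Coprime 16 p := (Nat.coprime_two_left.2 (hpm ▸ odd_two_mul_add_one m)).pow_left 4
  rw [show (p - 3) / 2 + 1 = m by omega]
  calc _ = ∑ k ∈ range m, (((-16) ^ k * (m + k).choose (2 * k) : ℤ) : ZMod (p ^ 2)) *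
          (((2 * k + 1) * 16 ^ k : ℕ) : ZMod (p ^ 2))⁻¹ := by
        refine sum_congr rfl fun k hk => ?_
        rw [← Nat.centralBinom_eq_two_mul_choose,
          centralBinom_eq_neg_sixteen_pow_mul_choose hsq hunit_mul (mem_range.mp hk).le]
        push_cast
        rfl
    _ = 0 := by
      refine ZMod.sum_intCast_mul_inv_eq_zero_of_sum_div_eq_zero
        (fun k hk => hunit ((hcop (by omega) (by grind)).mul_left (h16.pow_left k))) ?_
      rw [← sum_range_neg_one_pow_mul_choose_div_eq_zero hm]
      refine sum_congr rfl fun k _ => ?_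
      push_cast
      rw [neg_pow, mul_assoc]
      field_simp
end

section
/- For every nonnegative integer n, the sum over k from 0 to 2n of (-1)^k * binomial(2n, k)^3 equals (-1)^n * (3n)!/(n!)^3. -/
/-!
Zeilberger's algorithm produces a hypergeometric certificate `G(n, k)` with
`G(n, k + 1) - G(n, k) = c(n) · ((n + 1)² F(n + 1, k) + 3 (3n + 1)(3n + 2) F(n, k))`, where
`F(n, k) = (-1)^k C(2n, k)³` and `c(n) ≠ 0`. Summing over `k` telescopes to zero because `G` vanishes
at both ends, so the sum satisfies the first-order recurrence
`(n + 1)² S(n + 1) = -3 (3n + 1)(3n + 2) S(n)`, which `(-1)^n (3n)! / (n!)³` satisfies too.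
-/

open Finset Nat

section CastChoose

variable {R : Type*} [CommRing R]

theorem Nat.cast_choose_succ_right_mul (m k : ℕ) :
    (m.choose (k + 1) : R) * (k + 1) = m.choose k * (m - k) := by
  rcases le_or_gt k m with h | h
  · exact_mod_cast congrArg (Nat.cast : ℕ → R) (choose_succ_right_eq m k)
  · simp [choose_eq_zero_of_lt h, choose_eq_zero_of_lt (lt_succ_of_lt h)]

theorem Nat.cast_choose_mul_succ (m k : ℕ) :
    (m.choose k : R) * (m + 1) = (m + 1).choose k * (m + 1 - k) := by
  rcases le_or_gt k (m + 1) with h | h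
  · exact_mod_cast congrArg (Nat.cast : ℕ → R) (choose_mul_succ_eq m k)
  · simp [choose_eq_zero_of_lt h, choose_eq_zero_of_lt (lt_of_succ_lt h)]

end CastChoose

noncomputable def dixonSum (n : ℕ) : ℚ :=
  ∑ k ∈ range (2 * n + 1), (-1 : ℚ) ^ k * ((2 * n).choose k : ℚ) ^ 3

/-- Twice the polynomial part of Zeilberger's certificate for `dixonSum`. -/
def dixonCertificatePoly (n k : ℚ) : ℚ :=
  2 * (-58 - 392 * n - 1042 * n ^ 2 - 1364 * n ^ 3 - 880 * n ^ 4 - 224 * n ^ 5)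
  + (207 + 1113 * n + 2214 * n ^ 2 + 1932 * n ^ 3 + 624 * n ^ 4) * k
  + (-147 - 594 * n - 792 * n ^ 2 - 348 * n ^ 3) * k ^ 2
  + (48 + 132 * n + 90 * n ^ 2) * k ^ 3
  + (-6 - 9 * n) * k ^ 4

def dixonCertificate (n k : ℕ) : ℚ :=
  (-1 : ℚ) ^ k * ((2 * n + 2).choose k : ℚ) ^ 3 * (k : ℚ) ^ 3 * dixonCertificatePoly n k

theorem dixonCertificate_succ_sub (n k : ℕ) :
    dixonCertificate n (k + 1) - dixonCertificate n k =
      2 * ((2 * n + 1 : ℚ) * (2 * n + 2)) ^ 3 *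
        ((n + 1 : ℚ) ^ 2 * ((-1 : ℚ) ^ k * ((2 * n + 2).choose k : ℚ) ^ 3)
          + 3 * (3 * n + 1) * (3 * n + 2) * ((-1 : ℚ) ^ k * ((2 * n).choose k : ℚ) ^ 3)) := by
  have e₁ := Nat.cast_choose_succ_right_mul (R := ℚ) (2 * n + 2) k
  have e₂ := Nat.cast_choose_mul_succ (R := ℚ) (2 * n + 1) k
  have e₃ := Nat.cast_choose_mul_succ (R := ℚ) (2 * n) k
  rw [show 2 * n + 1 + 1 = 2 * n + 2 from rfl] at e₂
  have E₁ := congrArg (· ^ 3) e₁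
  have E₂ := congrArg (· ^ 3) e₂
  have E₃ := congrArg (· ^ 3) e₃
  simp only [dixonCertificate, pow_succ]
  push_cast at E₁ E₂ E₃ ⊢
  linear_combination (norm := skip)
    (-(-1 : ℚ) ^ k * dixonCertificatePoly n (k + 1)) * E₁
    - (6 * (3 * (n : ℚ) + 1) * (3 * n + 2) * (2 * n + 1 - k) ^ 3 * (-1 : ℚ) ^ k) * E₂
    - (6 * (3 * (n : ℚ) + 1) * (3 * n + 2) * (2 * n + 2) ^ 3 * (-1 : ℚ) ^ k) * E₃
  simp only [dixonCertificatePoly]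
  ring

theorem dixonSum_succ (n : ℕ) :
    dixonSum (n + 1) = -(3 * (3 * n + 1) * (3 * n + 2) / ((n : ℚ) + 1) ^ 2) * dixonSum n := by
  have hS₁ : dixonSum (n + 1) =
      ∑ k ∈ range (2 * n + 3), (-1 : ℚ) ^ k * ((2 * n + 2).choose k : ℚ) ^ 3 := rfl
  have hS₀ : dixonSum n =
      ∑ k ∈ range (2 * n + 3), (-1 : ℚ) ^ k * ((2 * n).choose k : ℚ) ^ 3 := by
    rw [sum_range_succ _ (2 * n + 2), sum_range_succ _ (2 * n + 1),
      choose_eq_zero_of_lt (by omega : 2 * n < 2 * n + 2),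
      choose_eq_zero_of_lt (by omega : 2 * n < 2 * n + 1)]
    simp [dixonSum]
  have htelescope :
      ∑ k ∈ range (2 * n + 3), (dixonCertificate n (k + 1) - dixonCertificate n k) = 0 := by
    rw [sum_range_sub]
    simp [dixonCertificate]
  simp only [dixonCertificate_succ_sub, ← mul_sum, sum_add_distrib, ← hS₀, ← hS₁] at htelescope
  have hc : 2 * ((2 * n + 1 : ℚ) * (2 * n + 2)) ^ 3 ≠ 0 := by positivity
  have hrec := (mul_eq_zero.mp htelescope).resolve_left hc
  field_simp
  linear_combination hrec

theorem cast_factorial_three_mul_succ_div (n : ℕ) :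
    ((3 * (n + 1))! : ℚ) / ((n + 1)! : ℚ) ^ 3 =
      3 * (3 * n + 1) * (3 * n + 2) / ((n : ℚ) + 1) ^ 2 * ((3 * n)! / (n ! : ℚ) ^ 3) := by
  rw [show 3 * (n + 1) = 3 * n + 2 + 1 from rfl, factorial_succ, factorial_succ,
    factorial_succ, factorial_succ]
  push_cast
  field_simp
  ring

theorem stmt_15 (n : ℕ) :
    ∑ k ∈ Finset.range (2 * n + 1), (-1 : ℚ) ^ k * ((2 * n).choose k : ℚ) ^ 3 =
    (-1 : ℚ) ^ n * ((3 * n).factorial : ℚ) / ((n.factorial : ℚ)) ^ 3 := by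
  change dixonSum n = _
  induction n with
  | zero => simp [dixonSum]
  | succ n ih =>
    rw [dixonSum_succ, ih, mul_div_assoc, mul_div_assoc _ ((3 * (n + 1))! : ℚ), cast_factorial_three_mul_succ_div]
    ring
end

section
/- For every odd positive integer n, the sum over k from 0 to n of binomial(n,k)^3 * (-1)^k * H_k equals ((-1)^((n+1)/2)/3) * (3n)!!/((n!!)^3), where H_k = 1 + 1/2 + ... + 1/k is the k-th harmonic number and (2m+1)!! = product of odd numbers 1*3*...*(2m+1). -/
/-!
Write `a(n, k) = (-1)^k C(n,k)^3` and `S(n) = ∑_k a(n, k) H_k`. Creative telescoping gives an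
explicit `G(n, k)` with
`(n+1)^3 (n+2)^3 ((n+2)^2 a(n+2, k) + 3(3n+2)(3n+4) a(n, k)) = G(n, k+1) - G(n, k)`.
Multiplying by `H_k` and summing by parts, the boundary terms vanish and what is left is
`∑_k G(n, k+1) / (k+1)`; up to a telescoping sum this is a sum of terms that change sign under
`k ↦ n + 2 - k` when `n` is odd, so it vanishes. Hence for odd `n`
`(n+2)^2 S(n+2) = -3(3n+2)(3n+4) S(n)`, the recurrence the closed form visibly satisfies, and both
sides equal `-1` at `n = 1`.
-/

open Finset

section Binomial

variable {R : Type*} [CommRing R]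

theorem succ_mul_cast_choose_succ (N k : ℕ) :
    ((k : R) + 1) * N.choose (k + 1) = ((N : R) - k) * N.choose k := by
  rcases le_or_gt k N with h | h
  · have := congrArg (Nat.cast : ℕ → R) (Nat.choose_succ_right_eq N k)
    push_cast [Nat.cast_sub h] at this
    linear_combination this
  · rw [Nat.choose_eq_zero_of_lt h, Nat.choose_eq_zero_of_lt (Nat.lt_succ_of_lt h)]
    simp

theorem succ_mul_cast_choose (N k : ℕ) :
    ((N : R) + 1) * N.choose k = ((N : R) + 1 - k) * (N + 1).choose k := by
  rcases le_or_gt k (N + 1) with h | h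
  · have := congrArg (Nat.cast : ℕ → R) (Nat.choose_mul_succ_eq N k)
    push_cast [Nat.cast_sub h] at this
    linear_combination this
  · rw [Nat.choose_eq_zero_of_lt (by omega), Nat.choose_eq_zero_of_lt h]
    simp

theorem cast_choose_mul_add_two (N k : ℕ) :
    ((N : R) + 1) * ((N : R) + 2) * N.choose k
      = ((N : R) + 1 - k) * ((N : R) + 2 - k) * (N + 2).choose k := by
  have h₁ := succ_mul_cast_choose (R := R) N k
  have h₂ := succ_mul_cast_choose (R := R) (N + 1) k
  push_cast at h₂
  linear_combination ((N : R) + 2) * h₁ + ((N : R) + 1 - k) * h₂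

end Binomial

theorem sum_range_eq_zero_of_reflect_eq_neg {M : Type*} [AddCommGroup M] [IsAddTorsionFree M]
    {f : ℕ → M} {N : ℕ} (hf : ∀ j ≤ N, f (N - j) = -f j) :
    ∑ j ∈ range (N + 1), f j = 0 := by
  rw [← neg_eq_self, ← sum_neg_distrib, ← sum_range_reflect]
  refine sum_congr rfl fun j hj => ?_
  rw [Nat.add_sub_cancel, hf j (by simpa [Nat.lt_succ_iff] using hj), neg_neg]

theorem sum_range_sub_mul_harmonic (G : ℕ → ℚ) (N : ℕ) :
    ∑ k ∈ range N, (G (k + 1) - G k) * harmonic k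
      = G N * harmonic N - ∑ k ∈ range N, G (k + 1) / (k + 1) := by
  induction N with
  | zero => simp
  | succ N ih =>
    rw [sum_range_succ, ih, sum_range_succ, harmonic_succ]
    push_cast
    ring

-- Zeilberger's algorithm for `a(n, k)`; the recurrence operator is the one in `certTerm_succ_sub`.
def certPoly (x y : ℚ) : ℚ :=
  3 * (3 * x + 4) * y ^ 4 - 3 * (3 * x + 4) * (5 * x + 8) * y ^ 3
    + 3 * (29 * x ^ 3 + 132 * x ^ 2 + 198 * x + 98) * y ^ 2
    - 3 * (26 * x ^ 4 + 161 * x ^ 3 + 369 * x ^ 2 + 371 * x + 138) * y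
    + (28 * x ^ 5 + 220 * x ^ 4 + 682 * x ^ 3 + 1042 * x ^ 2 + 784 * x + 232)

-- Chosen so that the remainder `symmPoly` is invariant under `y ↦ x + 2 - y`.
def gosperPoly (x y : ℚ) : ℚ :=
  (7 * x ^ 3 + 42 * x ^ 2 + 87 * x + 58) * y - (6 * x + 8) * y ^ 3

def symmPoly (x y : ℚ) : ℚ :=
  y ^ 2 * certPoly x y - ((x + 2 - y) ^ 3 * gosperPoly x (y + 1) + y ^ 3 * gosperPoly x y)

theorem symmPoly_reflect (x y : ℚ) : symmPoly x (x + 2 - y) = symmPoly x y := by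
  unfold symmPoly certPoly gosperPoly
  ring

def signedCube (n k : ℕ) : ℚ := (n.choose k : ℚ) ^ 3 * (-1) ^ k

theorem signedCube_of_lt {n k : ℕ} (h : n < k) : signedCube n k = 0 := by
  simp [signedCube, Nat.choose_eq_zero_of_lt h]

theorem signedCube_succ (n k : ℕ) :
    ((k : ℚ) + 1) ^ 3 * signedCube n (k + 1) = -(((n : ℚ) - k) ^ 3 * signedCube n k) := by
  have h := congrArg (· ^ 3) (succ_mul_cast_choose_succ (R := ℚ) n k)
  simp only [mul_pow] at h
  unfold signedCube
  linear_combination (-1 : ℚ) ^ (k + 1) * h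

theorem signedCube_add_two (n k : ℕ) :
    ((n : ℚ) + 1) ^ 3 * ((n : ℚ) + 2) ^ 3 * signedCube n k
      = ((n : ℚ) + 1 - k) ^ 3 * ((n : ℚ) + 2 - k) ^ 3 * signedCube (n + 2) k := by
  have h := congrArg (· ^ 3) (cast_choose_mul_add_two (R := ℚ) n k)
  simp only [mul_pow] at h
  unfold signedCube
  linear_combination (-1 : ℚ) ^ k * h

section Certificate

variable (n : ℕ)

def certTerm (k : ℕ) : ℚ := -(signedCube (n + 2) k * (k : ℚ) ^ 3 * certPoly n k)

def certWeight (k : ℕ) : ℚ := signedCube (n + 2) k * (k : ℚ) ^ 2 * certPoly n k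

def gosperTerm (k : ℕ) : ℚ := signedCube (n + 2) k * (k : ℚ) ^ 3 * gosperPoly n k

def symmTerm (k : ℕ) : ℚ := signedCube (n + 2) k * symmPoly n k

theorem certTerm_succ_sub (k : ℕ) :
    ((n : ℚ) + 1) ^ 3 * ((n : ℚ) + 2) ^ 3
        * (((n : ℚ) + 2) ^ 2 * signedCube (n + 2) k
          + 3 * (3 * (n : ℚ) + 2) * (3 * (n : ℚ) + 4) * signedCube n k)
      = certTerm n (k + 1) - certTerm n k := by
  have h₁ := signedCube_succ (n + 2) k
  have h₂ := signedCube_add_two n k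
  unfold certTerm
  push_cast at h₁ ⊢
  linear_combination (norm := skip) certPoly n (k + 1) * h₁
    + 3 * (3 * (n : ℚ) + 2) * (3 * (n : ℚ) + 4) * h₂
  unfold certPoly
  ring

theorem certTerm_succ_div (k : ℕ) :
    certTerm n (k + 1) / ((k : ℚ) + 1) = -certWeight n (k + 1) := by
  unfold certTerm certWeight
  push_cast
  field_simp

theorem certTerm_of_lt {k : ℕ} (h : n + 2 < k) : certTerm n k = 0 := by
  simp [certTerm, signedCube_of_lt h]

theorem certWeight_eq (k : ℕ) :
    certWeight n k = gosperTerm n k - gosperTerm n (k + 1) + symmTerm n k := by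
  have h := signedCube_succ (n + 2) k
  push_cast at h
  unfold certWeight gosperTerm symmTerm symmPoly
  push_cast
  linear_combination gosperPoly n (k + 1) * h

theorem symmTerm_reflect (hn : Odd n) {k : ℕ} (hk : k ≤ n + 2) :
    symmTerm n (n + 2 - k) = -symmTerm n k := by
  have hsign : (-1 : ℚ) ^ (n + 2 - k) = -(-1) ^ k := by
    have h : (-1 : ℚ) ^ (n + 2) = -1 := (hn.add_even even_two).neg_one_pow
    have hsq : ((-1 : ℚ) ^ k) ^ 2 = 1 := by
      rw [← pow_mul, mul_comm, pow_mul, neg_one_sq, one_pow]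
    rw [← Nat.sub_add_cancel hk, pow_add] at h
    linear_combination (-1 : ℚ) ^ k * h - (-1 : ℚ) ^ (n + 2 - k) * hsq
  have hcast : ((n + 2 - k : ℕ) : ℚ) = (n : ℚ) + 2 - k := by
    push_cast [Nat.cast_sub hk]
    ring
  unfold symmTerm signedCube
  rw [Nat.choose_symm hk, hsign, hcast, symmPoly_reflect]
  ring

theorem sum_certWeight_succ (hn : Odd n) : ∑ k ∈ range (n + 3), certWeight n (k + 1) = 0 := by
  have hsymm : ∑ k ∈ range (n + 3), symmTerm n k = 0 :=
    sum_range_eq_zero_of_reflect_eq_neg fun k hk => symmTerm_reflect n hn hk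
  calc ∑ k ∈ range (n + 3), certWeight n (k + 1)
      = ∑ k ∈ range (n + 4), certWeight n k := by
        rw [sum_range_succ' _ (n + 3)]
        simp [certWeight]
    _ = (gosperTerm n 0 - gosperTerm n (n + 4))
          + (∑ k ∈ range (n + 3), symmTerm n k + symmTerm n (n + 3)) := by
        simp only [certWeight_eq, sum_add_distrib, sum_range_sub']
        rw [sum_range_succ]
    _ = 0 := by
        rw [hsymm]
        simp [gosperTerm, symmTerm, signedCube_of_lt]

end Certificate

noncomputable def cubeSum (n : ℕ) : ℚ := ∑ k ∈ range (n + 1), signedCube n k * harmonic k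

theorem sum_range_add_signedCube_mul_harmonic (n m : ℕ) :
    ∑ k ∈ range (n + 1 + m), signedCube n k * harmonic k = cubeSum n := by
  rw [sum_range_add, cubeSum, add_eq_left]
  exact sum_eq_zero fun k _ => by rw [signedCube_of_lt (by omega), zero_mul]

theorem cubeSum_recurrence {n : ℕ} (hn : Odd n) :
    ((n : ℚ) + 2) ^ 2 * cubeSum (n + 2)
      + 3 * (3 * (n : ℚ) + 2) * (3 * (n : ℚ) + 4) * cubeSum n = 0 := by
  have key : ((n : ℚ) + 1) ^ 3 * ((n : ℚ) + 2) ^ 3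
      * (((n : ℚ) + 2) ^ 2 * cubeSum (n + 2)
        + 3 * (3 * (n : ℚ) + 2) * (3 * (n : ℚ) + 4) * cubeSum n) = 0 :=
    calc _ = ∑ k ∈ range (n + 3), (certTerm n (k + 1) - certTerm n k) * harmonic k := by
          rw [← sum_range_add_signedCube_mul_harmonic (n + 2) 0,
            ← sum_range_add_signedCube_mul_harmonic n 2, mul_sum, mul_sum, ← sum_add_distrib,
            mul_sum]
          exact sum_congr rfl fun k _ => by rw [← certTerm_succ_sub]; ring
      _ = -∑ k ∈ range (n + 3), certTerm n (k + 1) / ((k : ℚ) + 1) := by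
          rw [sum_range_sub_mul_harmonic, certTerm_of_lt n (by omega)]
          ring
      _ = 0 := by simp only [certTerm_succ_div, sum_neg_distrib, sum_certWeight_succ n hn, neg_zero]
  exact (mul_eq_zero.mp key).resolve_left (by positivity)

noncomputable def closedForm (n : ℕ) : ℚ :=
  (-1 : ℚ) ^ ((n + 1) / 2) / 3
    * ((Nat.doubleFactorial (3 * n) : ℚ) / (Nat.doubleFactorial n : ℚ) ^ 3)

theorem closedForm_recurrence (n : ℕ) :
    ((n : ℚ) + 2) ^ 2 * closedForm (n + 2)
      + 3 * (3 * (n : ℚ) + 2) * (3 * (n : ℚ) + 4) * closedForm n = 0 := by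
  have h3 : 3 * (n + 2) = 3 * n + 2 + 2 + 2 := by ring
  have hsign : (n + 2 + 1) / 2 = (n + 1) / 2 + 1 := by omega
  have hfac : (Nat.doubleFactorial n : ℚ) ≠ 0 := by positivity
  unfold closedForm
  rw [h3, hsign, Nat.doubleFactorial_add_two, Nat.doubleFactorial_add_two,
    Nat.doubleFactorial_add_two, Nat.doubleFactorial_add_two, pow_succ]
  push_cast
  field_simp
  ring

theorem cubeSum_eq_closedForm {n : ℕ} (hn : Odd n) : cubeSum n = closedForm n := by
  obtain ⟨t, rfl⟩ := hn
  induction t with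
  | zero => norm_num [cubeSum, closedForm, signedCube, sum_range_succ, Nat.doubleFactorial]
  | succ t ih =>
    have hodd : Odd (2 * t + 1) := odd_two_mul_add_one t
    have hS := cubeSum_recurrence hodd
    have hC := closedForm_recurrence (2 * t + 1)
    rw [ih] at hS
    rw [show 2 * (t + 1) + 1 = 2 * t + 1 + 2 by ring]
    exact mul_left_cancel₀ (by positivity : ((2 * t + 1 : ℕ) + 2 : ℚ) ^ 2 ≠ 0) (by linarith)

theorem stmt_16_general (n : ℕ) (hodd : Odd n) :
    ∑ k ∈ Finset.range (n + 1),
      ((n.choose k : ℚ)) ^ 3 * (-1) ^ k * (∑ j ∈ Finset.Icc 1 k, (1 : ℚ) / j) =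
    (-1 : ℚ) ^ ((n + 1) / 2) / 3 *
      ((Nat.doubleFactorial (3 * n) : ℚ) / ((Nat.doubleFactorial n : ℚ)) ^ 3) := by
  simpa only [cubeSum, closedForm, signedCube, harmonic_eq_sum_Icc, one_div]
    using cubeSum_eq_closedForm hodd

theorem stmt_16 (n : ℕ) (hn : 0 < n) (hodd : Odd n) :
    ∑ k ∈ Finset.range (n + 1),
      ((n.choose k : ℚ)) ^ 3 * (-1) ^ k * (∑ j ∈ Finset.Icc 1 k, (1 : ℚ) / j) =
    (-1 : ℚ) ^ ((n + 1) / 2) / 3 *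
      ((Nat.doubleFactorial (3 * n) : ℚ) / ((Nat.doubleFactorial n : ℚ)) ^ 3) :=
  stmt_16_general n hodd
end

section
/- For every positive integer n, the sum over k from 0 to n of binomial(n+k, 2k) * C_k / (-2)^k equals (-1)^((n-1)/2) * C_{(n-1)/2} / 2^n if n is odd, and equals 0 if n is even, where C_k = binomial(2k,k)/(k+1) is the k-th Catalan number. -/
/-!
Write `S n = ∑ₖ F n k` with `F n k = C(n+k, 2k) Cₖ / (-2)ᵏ`. Zeilberger's algorithm finds the
recurrence `n S(n) + (n+3) S(n+2) = 0`, with certificate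
`G n k = -2k(k+1)(2n+3) / ((n+k+1)(n+k+2)) · F (n+2) k`: the summands satisfy
`n F n k + (n+3) F (n+2) k = G n (k+1) - G n k`, a rational-function identity once the shifted
binomials and Catalan numbers are expressed through `C(n+2+k, 2k)` and `Cₖ`. Summing, the
right side telescopes to `0`. With `S 1 = 1/2` and `(k+2) Cₖ₊₁ = 2(2k+1) Cₖ` the recurrence gives
the odd values by induction; at `n = 0` it reads `3 S 2 = 0`, and so every `S (2j+2)` vanishes.
-/

open Finset

theorem Nat.cast_add_one_mul_choose {R : Type*} [CommRing R] (m r : ℕ) :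
    ((m : R) + 1) * m.choose r = ((m : R) + 1 - r) * (m + 1).choose r := by
  rcases le_or_gt r (m + 1) with h | h
  · have := congrArg (Nat.cast (R := R)) (Nat.choose_mul_succ_eq m r)
    push_cast [Nat.cast_sub h] at this
    linear_combination this
  · simp [Nat.choose_eq_zero_of_lt h, Nat.choose_eq_zero_of_lt (show m < r by omega)]

theorem Nat.cast_choose_succ_mul {R : Type*} [CommRing R] (m r : ℕ) :
    (m.choose (r + 1) : R) * (r + 1) = m.choose r * ((m : R) - r) := by
  rcases le_or_gt r m with h | h
  · have := congrArg (Nat.cast (R := R)) (Nat.choose_succ_right_eq m r)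
    push_cast [Nat.cast_sub h] at this
    exact this
  · simp [Nat.choose_eq_zero_of_lt h, Nat.choose_eq_zero_of_lt (show m < r + 1 by omega)]

theorem Nat.cast_add_one_mul_add_two_mul_choose {R : Type*} [CommRing R] (m r : ℕ) :
    ((m : R) + 1) * ((m : R) + 2) * m.choose r =
      ((m : R) + 1 - r) * ((m : R) + 2 - r) * (m + 2).choose r := by
  have h₁ := Nat.cast_add_one_mul_choose (R := R) m r
  have h₂ := Nat.cast_add_one_mul_choose (R := R) (m + 1) r
  push_cast at h₂
  linear_combination ((m : R) + 2) * h₁ + ((m : R) + 1 - r) * h₂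

theorem Nat.cast_choose_add_two_mul {R : Type*} [CommRing R] (m r : ℕ) :
    ((m + 1).choose (r + 2) : R) * (r + 1) * (r + 2) =
      m.choose r * ((m : R) + 1) * ((m : R) - r) := by
  have h₁ := congrArg (Nat.cast (R := R)) (Nat.add_one_mul_choose_eq m r)
  push_cast at h₁
  have h₂ := Nat.cast_choose_succ_mul (R := R) (m + 1) (r + 1)
  push_cast at h₂
  linear_combination ((r : R) + 1) * h₂ - ((m : R) - r) * h₁

theorem add_two_mul_catalan_succ (k : ℕ) :
    (k + 2) * catalan (k + 1) = 2 * (2 * k + 1) * catalan k := by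
  apply Nat.eq_of_mul_eq_mul_left k.succ_pos
  calc (k + 1) * ((k + 2) * catalan (k + 1))
      = (k + 1) * (k + 1).centralBinom := by rw [← succ_mul_catalan_eq_centralBinom]
    _ = (k + 1) * (2 * (2 * k + 1) * catalan k) := by
      rw [Nat.succ_mul_centralBinom_succ, ← succ_mul_catalan_eq_centralBinom]; ring

def catalanTerm (n k : ℕ) : ℚ := ((n + k).choose (2 * k) : ℚ) * catalan k / (-2) ^ k

def catalanSum (n : ℕ) : ℚ := ∑ k ∈ range (n + 1), catalanTerm n k

def catalanCertificate (n k : ℕ) : ℚ :=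
  -(2 * k * (k + 1) * (2 * n + 3)) / ((n + k + 1) * (n + k + 2)) * catalanTerm (n + 2) k

theorem catalanTerm_telescope (n k : ℕ) :
    n * catalanTerm n k + (n + 3) * catalanTerm (n + 2) k =
      catalanCertificate n (k + 1) - catalanCertificate n k := by
  have h₁ := Nat.cast_add_one_mul_add_two_mul_choose (R := ℚ) (n + k) (2 * k)
  have h₂ := Nat.cast_choose_add_two_mul (R := ℚ) (n + 2 + k) (2 * k)
  have h₃ : ((k : ℚ) + 2) * catalan (k + 1) = 2 * (2 * k + 1) * catalan k := by
    exact_mod_cast add_two_mul_catalan_succ k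
  rw [show n + k + 2 = n + 2 + k by omega] at h₁
  rw [show n + 2 + k + 1 = n + 2 + (k + 1) by omega, show 2 * k + 2 = 2 * (k + 1) by omega] at h₂
  simp only [catalanCertificate, catalanTerm]
  push_cast at h₁ h₂ ⊢
  rw [pow_succ]
  field_simp
  linear_combination ((n : ℚ) + k + 2) *
    ((n : ℚ) * (n + k + 3) * catalan k * h₁
      - ((k : ℚ) + 1) * (2 * n + 3) * (n + k + 1) * (n + 2 + (k + 1)).choose (2 * (k + 1)) * h₃
      - (2 * (n : ℚ) + 3) * (n + k + 1) * catalan k * h₂)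

theorem catalanTerm_eq_zero_of_lt {n k : ℕ} (h : n < k) : catalanTerm n k = 0 := by
  simp [catalanTerm, Nat.choose_eq_zero_of_lt (show n + k < 2 * k by omega)]

theorem catalanSum_recurrence (n : ℕ) : n * catalanSum n + (n + 3) * catalanSum (n + 2) = 0 := by
  have hsum : catalanSum n = ∑ k ∈ range (n + 3), catalanTerm n k := by
    rw [catalanSum, sum_range_succ _ (n + 2), sum_range_succ _ (n + 1),
      catalanTerm_eq_zero_of_lt (by omega), catalanTerm_eq_zero_of_lt (by omega),
      add_zero, add_zero]
  have hend : catalanCertificate n (n + 3) = 0 := by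
    rw [catalanCertificate, catalanTerm_eq_zero_of_lt (by omega), mul_zero]
  rw [hsum, catalanSum, mul_sum, mul_sum, ← sum_add_distrib,
    sum_congr rfl fun k _ => catalanTerm_telescope n k, sum_range_sub, hend,
    show catalanCertificate n 0 = 0 by simp [catalanCertificate], sub_zero]

theorem catalanSum_one : catalanSum 1 = 1 / 2 := by
  norm_num [catalanSum, catalanTerm, sum_range_succ]

theorem catalanSum_two_mul_add_one (j : ℕ) :
    catalanSum (2 * j + 1) = (-1) ^ j * catalan j / 2 ^ (2 * j + 1) := by
  induction j with
  | zero => simp [catalanSum_one]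
  | succ j ih =>
    have hrec := catalanSum_recurrence (2 * j + 1)
    have hcat : ((j : ℚ) + 2) * catalan (j + 1) = 2 * (2 * j + 1) * catalan j := by
      exact_mod_cast add_two_mul_catalan_succ j
    rw [ih, show 2 * j + 1 + 2 = 2 * (j + 1) + 1 by omega] at hrec
    have hpos : (2 * j + 1 : ℚ) + 3 ≠ 0 := by positivity
    push_cast at hrec ⊢
    apply mul_left_cancel₀ hpos
    linear_combination hrec + (-1 : ℚ) ^ j / 2 ^ (2 * j + 2) * hcat

theorem catalanSum_two_mul_add_two (j : ℕ) : catalanSum (2 * j + 2) = 0 := by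
  induction j with
  | zero => simpa using catalanSum_recurrence 0
  | succ j ih =>
    have hrec := catalanSum_recurrence (2 * j + 2)
    rw [ih, show 2 * j + 2 + 2 = 2 * (j + 1) + 2 by omega] at hrec
    have hpos : ((2 * j + 2 : ℕ) : ℚ) + 3 ≠ 0 := by positivity
    rw [mul_zero, zero_add] at hrec
    exact (mul_eq_zero.mp hrec).resolve_left hpos

theorem stmt_17 (n : ℕ) (hn : 1 ≤ n) :
    ∑ k ∈ Finset.range (n + 1),
      ((n + k).choose (2 * k) : ℚ) * (catalan k : ℚ) / (-2 : ℚ) ^ k =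
    if Odd n then (-1 : ℚ) ^ ((n - 1) / 2) * (catalan ((n - 1) / 2) : ℚ) / 2 ^ n
    else 0 := by
  change catalanSum n = _
  obtain ⟨j, rfl | rfl⟩ := n.even_or_odd'
  · obtain ⟨j, rfl⟩ : ∃ i, j = i + 1 := ⟨j - 1, by omega⟩
    rw [if_neg (Nat.not_odd_iff_even.mpr (even_two_mul _))]
    exact catalanSum_two_mul_add_two j
  · simpa using catalanSum_two_mul_add_one j
end
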